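/- arXiv:2605.10691 — 8 statements merged into one kernel-verified Lean document; each statement's English description precedes it below -/
import Mathlib

section
/- Let G be a group, A ⊆ G a non-empty subset, and p ≥ 1 an integer with e ∈ A^p (the set of products of exactly p elements of A). Let A_e := A ∪ {e}. Then there exists a finite set E ⊆ ⟨A⟩ with |E| ≤ p such that A_e^h ⊆ E · A^h for every h ≥ 1. -/
/-!
Fix `a ∈ A`. Since `1 ∈ A ^ p`, multiplying by `A ^ p` never loses elements, so `A ^ n ⊆ A ^ m`
whenever `n ≤ m` and `n ≡ m [MOD p]`. An element `x` of `(A ∪ {1}) ^ h` lies in some `A ^ k` with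
`k ≤ h`; choosing `j < p` with `j + k ≡ h [MOD p]` gives `a ^ j * x ∈ A ^ (j + k) ⊆ A ^ h`, so `x`
lies in `E * A ^ h` for `E = {a⁻¹ ^ j | j < p}`.
-/

open Pointwise

namespace Set

variable {M : Type*} [Monoid M] {s : Set M}

lemma exists_mem_pow_of_mem_union_one_pow {x : M} :
    ∀ {n : ℕ}, x ∈ (s ∪ {1}) ^ n → ∃ k ≤ n, x ∈ s ^ k
  | 0, hx => ⟨0, le_rfl, hx⟩
  | n + 1, hx => by
    rw [pow_succ'] at hx
    obtain ⟨a, ha, y, hy, rfl⟩ := hx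
    obtain ⟨k, hkn, hyk⟩ := exists_mem_pow_of_mem_union_one_pow hy
    rcases ha with ha | rfl
    · exact ⟨k + 1, by omega, pow_succ' s k ▸ mul_mem_mul ha hyk⟩
    · exact ⟨k, by omega, by simpa using hyk⟩

lemma pow_subset_pow_of_modEq {p m n : ℕ} (hs : 1 ∈ s ^ p) (hmn : m ≤ n)
    (hmod : m ≡ n [MOD p]) : s ^ m ⊆ s ^ n := by
  obtain ⟨c, hc⟩ := (Nat.modEq_iff_dvd' hmn).1 hmod
  obtain rfl : n = m + p * c := by omega
  rw [pow_add, pow_mul]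
  exact subset_mul_left _ (one_mem_pow hs)

end Set

open Set in
lemma union_one_pow_subset_inv_pow_mul_pow {G : Type*} [Group G] [DecidableEq G] {A : Set G}
    {a : G} {p : ℕ} (ha : a ∈ A) (hp : 1 ≤ p) (hone : 1 ∈ A ^ p) (h : ℕ) :
    (A ∪ {1}) ^ h ⊆ ((Finset.range p).image (a⁻¹ ^ ·) : Set G) * A ^ h := by
  intro x hx
  obtain ⟨k, hkh, hxk⟩ := exists_mem_pow_of_mem_union_one_pow hx
  set j := (h - k) % p
  have hj_mem : a ^ j * x ∈ A ^ h := by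
    refine pow_subset_pow_of_modEq hone (m := j + k) (by have := Nat.mod_le (h - k) p; omega) ?_ ?_
    · simpa [Nat.sub_add_cancel hkh] using (Nat.mod_modEq (h - k) p).add_right k
    · rw [pow_add]
      exact mul_mem_mul (pow_mem_pow ha) hxk
  refine ⟨a⁻¹ ^ j, ?_, a ^ j * x, hj_mem, by simp [inv_pow]⟩
  simpa using ⟨j, Nat.mod_lt _ hp, rfl⟩

theorem stmt_0 {G : Type*} [Group G] (A : Set G) (hA : A.Nonempty)
    (p : ℕ) (hp : 1 ≤ p) (hep : (1 : G) ∈ A ^ p) :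
    ∃ E : Finset G, (E : Set G) ⊆ (Subgroup.closure A : Set G) ∧ E.card ≤ p ∧
      ∀ h : ℕ, 1 ≤ h → (A ∪ {1}) ^ h ⊆ (E : Set G) * A ^ h := by
  classical
  obtain ⟨a, ha⟩ := hA
  refine ⟨(Finset.range p).image (a⁻¹ ^ ·), ?_, ?_, fun h _ ↦
    union_one_pow_subset_inv_pow_mul_pow ha hp hep h⟩
  · simpa [Set.subset_def] using fun j _ ↦
      inv_mem (pow_mem (Subgroup.subset_closure ha) j)
  · exact Finset.card_image_le.trans (Finset.card_range p).le
end

section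
/- Let G be a group, A ⊆ G non-empty, and suppose e ∈ A^p for some p ≥ 1. If A ∪ {e} is an asymptotic (r,l)-approximate group, then A is an asymptotic (r, l·p)-approximate group. -/
open Pointwise

/-- `A` is an asymptotic `(r, l)`-approximate group: for all sufficiently large `h`,
`A ^ (r * h)` is covered by at most `l` left translates of `A ^ h`. -/
def IsAsympApproxGroup {G : Type*} [Group G] (A : Set G) (r l : ℕ) : Prop :=
  ∃ h₀ : ℕ, ∀ h : ℕ, h₀ ≤ h → ∃ X : Finset G, X.card ≤ l ∧ A ^ (r * h) ⊆ (X : Set G) * A ^ h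

private lemma list_prod_mem_pow {G : Type*} [Group G] {A : Set G} :
    ∀ (L : List G), (∀ x ∈ L, x ∈ A) → L.prod ∈ A ^ L.length := by
  intro L
  induction L with
  | nil => intro _; simp
  | cons a L ih =>
      intro hmem
      rw [List.prod_cons, List.length_cons, pow_succ']
      exact Set.mul_mem_mul (hmem a (by simp)) (ih fun x hx => hmem x (by simp [hx]))

private lemma one_mem_pow_mul {G : Type*} [Group G] {A : Set G} {p : ℕ}
    (hep : (1 : G) ∈ A ^ p) : ∀ n : ℕ, (1 : G) ∈ A ^ (p * n) := by
  intro n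
  induction n with
  | zero => simp
  | succ n ih =>
      have : A ^ (p * (n + 1)) = A ^ (p * n) * A ^ p := by rw [← pow_add, Nat.mul_succ]
      rw [this]
      simpa using Set.mul_mem_mul ih hep

private lemma mem_union_pow {G : Type*} [Group G] {A : Set G} :
    ∀ (h : ℕ) (b : G), b ∈ (A ∪ {1}) ^ h → ∃ k ≤ h, b ∈ A ^ k := by
  intro h
  induction h with
  | zero => intro b hb; exact ⟨0, le_refl _, hb⟩
  | succ h ih =>
      intro b hb
      rw [pow_succ'] at hb
      obtain ⟨c, hc, d, hd, rfl⟩ := hb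
      obtain ⟨k, hk, hdk⟩ := ih d hd
      rcases hc with hc | hc
      · exact ⟨k + 1, by omega, by rw [pow_succ']; exact Set.mul_mem_mul hc hdk⟩
      · rcases hc with rfl
        exact ⟨k, by omega, by simpa using hdk⟩

theorem stmt_1 {G : Type*} [Group G] (A : Set G) (hA : A.Nonempty)
    (p : ℕ) (hp : 1 ≤ p) (hep : (1 : G) ∈ A ^ p) (r l : ℕ)
    (h : IsAsympApproxGroup (A ∪ {1}) r l) :
    IsAsympApproxGroup A r (l * p) := by
  classical
  obtain ⟨f, hf⟩ := Set.mem_pow.mp hep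
  set L : List G := List.ofFn (fun i => (f i : G)) with hL
  have hLlen : L.length = p := by simp [hL]
  have hLmem : ∀ x ∈ L, x ∈ A := by
    intro x hx
    rw [hL, List.mem_ofFn] at hx
    obtain ⟨i, rfl⟩ := hx
    exact (f i).2
  have hLprod : L.prod = 1 := hf
  obtain ⟨h₀, hcov⟩ := h
  refine ⟨h₀, fun hh hhh => ?_⟩
  obtain ⟨X, hXcard, hXcov⟩ := hcov hh hhh
  refine ⟨X * (Finset.Icc 1 p).image (fun j => (L.take j).prod), ?_, ?_⟩
  · calc (X * (Finset.Icc 1 p).image (fun j => (L.take j).prod)).card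
        ≤ X.card * ((Finset.Icc 1 p).image (fun j => (L.take j).prod)).card :=
          Finset.card_mul_le
      _ ≤ l * p := by
          apply Nat.mul_le_mul hXcard
          exact le_trans Finset.card_image_le (by simp)
  · intro x hx
    have hx' : x ∈ (X : Set G) * (A ∪ {1}) ^ hh :=
      hXcov (Set.pow_subset_pow_left Set.subset_union_left hx)
    obtain ⟨x₀, hx₀, b, hb, rfl⟩ := hx'
    obtain ⟨k, hk, hbk⟩ := mem_union_pow hh b hb
    set rr := (hh - k) % p with hrr
    set q := (hh - k) / p with hq
    have hrrp : rr < p := Nat.mod_lt _ hp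
    have hdiv : rr + p * q = hh - k := Nat.mod_add_div (hh - k) p
    set j := p - rr with hj
    have hj1 : 1 ≤ j := by omega
    have hjp : j ≤ p := by omega
    -- the tail element
    have hdrop : (L.drop j).prod ∈ A ^ (p - j) := by
      have := list_prod_mem_pow (L.drop j) (fun x hx => hLmem x (List.mem_of_mem_drop hx))
      rwa [List.length_drop, hLlen] at this
    have hone : (1 : G) ∈ A ^ (p * q) := one_mem_pow_mul hep q
    have hw : (L.drop j).prod * (1 * b) ∈ A ^ hh := by
      have h1 : (1 : G) * b ∈ A ^ (p * q + k) := by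
        rw [pow_add]; exact Set.mul_mem_mul hone hbk
      have h2 : (L.drop j).prod * (1 * b) ∈ A ^ ((p - j) + (p * q + k)) := by
        rw [pow_add]; exact Set.mul_mem_mul hdrop h1
      have hexp : (p - j) + (p * q + k) = hh := by omega
      rwa [hexp] at h2
    refine ⟨x₀ * (L.take j).prod, ?_, (L.drop j).prod * (1 * b), hw, ?_⟩
    · rw [Finset.coe_mul]
      exact Set.mul_mem_mul hx₀ (by
        rw [Finset.coe_image]
        exact Set.mem_image_of_mem _ (by simp [Finset.mem_Icc, hj1, hjp]))
    · have : (L.take j).prod * (L.drop j).prod = 1 := by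
        rw [← List.prod_append, List.take_append_drop, hLprod]
      show (x₀ * (L.take j).prod) * ((L.drop j).prod * (1 * b)) = x₀ * b
      rw [one_mul, mul_assoc, ← mul_assoc (L.take j).prod, this, one_mul]
end

section
/- Let G be a group, M ⊆ G a subsemigroup containing e, and F ⊆ N_G(M) non-empty. If F is an asymptotic (r,l)-approximate group, then A := FM is also an asymptotic (r,l)-approximate group. -/
open Pointwise

theorem stmt_7 {G : Type*} [Group G] (M : Set G)
    (hM : ∀ a ∈ M, ∀ b ∈ M, a * b ∈ M) (hone : (1 : G) ∈ M)
    (F : Set G) (hFne : F.Nonempty)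
    (hF : ∀ f ∈ F, (fun m => f * m * f⁻¹) '' M = M)
    (r l : ℕ) (h : IsAsympApproxGroup F r l) :
    IsAsympApproxGroup (F * M) r l := by
  obtain ⟨h₀, hH⟩ := h
  -- M * F ⊆ F * M
  have hMF : M * F ⊆ F * M := by
    rintro x ⟨m, hm, f, hf, rfl⟩
    have : m ∈ (fun m => f * m * f⁻¹) '' M := (hF f hf).symm ▸ hm
    obtain ⟨m', hm', hmm'⟩ := this
    exact ⟨f, hf, m', hm', by rw [← hmm']; group⟩
  have hMM : M * M ⊆ M := by
    rintro x ⟨a, ha, b, hb, rfl⟩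
    exact hM a ha b hb
  have hFsub : F ⊆ F * M := fun f hf => ⟨f, hf, 1, hone, mul_one f⟩
  -- upper bound: (F*M)^n ⊆ F^n * M
  have hup : ∀ n : ℕ, (F * M) ^ n ⊆ F ^ n * M := by
    intro n
    induction n with
    | zero =>
        simp only [pow_zero, one_mul]
        intro x hx
        rw [Set.mem_one] at hx
        subst hx
        exact hone
    | succ n ih =>
        rw [pow_succ, pow_succ]
        calc (F * M) ^ n * (F * M) ⊆ F ^ n * M * (F * M) :=
              Set.mul_subset_mul_right ih
          _ = F ^ n * (M * F) * M := by rw [mul_assoc, mul_assoc, mul_assoc]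
          _ ⊆ F ^ n * (F * M) * M :=
              Set.mul_subset_mul_right (Set.mul_subset_mul_left hMF)
          _ = F ^ n * F * (M * M) := by rw [mul_assoc, mul_assoc, mul_assoc]
          _ ⊆ F ^ n * F * M := Set.mul_subset_mul_left hMM
  -- lower bound: for n ≥ 1, F^n * M ⊆ (F*M)^n
  have hdown : ∀ n : ℕ, 1 ≤ n → F ^ n * M ⊆ (F * M) ^ n := by
    intro n hn
    obtain ⟨k, rfl⟩ := Nat.exists_eq_add_of_le hn
    rw [add_comm, pow_succ, pow_succ, mul_assoc]
    exact Set.mul_subset_mul (Set.pow_subset_pow_left hFsub) Set.Subset.rfl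
  refine ⟨max h₀ 1, fun n hn => ?_⟩
  obtain ⟨X, hXcard, hXcov⟩ := hH n (le_trans (le_max_left _ _) hn)
  refine ⟨X, hXcard, ?_⟩
  calc (F * M) ^ (r * n) ⊆ F ^ (r * n) * M := hup _
    _ ⊆ (X : Set G) * F ^ n * M := Set.mul_subset_mul_right hXcov
    _ = (X : Set G) * (F ^ n * M) := mul_assoc _ _ _
    _ ⊆ (X : Set G) * (F * M) ^ n :=
        Set.mul_subset_mul_left (hdown n (le_trans (le_max_right _ _) hn))
end

section
/- Let G be a group and B ⊆ A ⊆ G non-empty subsets with A ⊆ B^m for some m ∈ ℕ. If for every r ∈ ℕ there exist l and h₀ such that B^{rh} ⊆ X_h B^h for all h ≥ h₀ with |X_h| ≤ l (i.e., B is an asymptotic approximate group), then A is an asymptotic approximate group. More precisely, if B is asymptotic (mr, l)-approximate, then A is asymptotic (r, l)-approximate. -/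
open Pointwise

theorem stmt_9 {G : Type*} [Group G] (A B : Set G) (hB : B.Nonempty)
    (hBA : B ⊆ A) (m : ℕ) (hAB : A ⊆ B ^ m) :
    (∀ r l : ℕ, IsAsympApproxGroup B (m * r) l → IsAsympApproxGroup A r l) ∧
    ((∀ r : ℕ, ∃ l : ℕ, IsAsympApproxGroup B r l) →
      ∀ r : ℕ, ∃ l : ℕ, IsAsympApproxGroup A r l) := by
  have main : ∀ r l : ℕ, IsAsympApproxGroup B (m * r) l → IsAsympApproxGroup A r l := by
    rintro r l ⟨h₀, hX⟩
    refine ⟨h₀, fun h hh => ?_⟩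
    obtain ⟨X, hcard, hsub⟩ := hX h hh
    refine ⟨X, hcard, ?_⟩
    calc A ^ (r * h) ⊆ (B ^ m) ^ (r * h) := Set.pow_subset_pow_left hAB
      _ = B ^ (m * r * h) := by rw [← pow_mul, mul_assoc]
      _ ⊆ (X : Set G) * B ^ h := hsub
      _ ⊆ (X : Set G) * A ^ h :=
        Set.mul_subset_mul_left (Set.pow_subset_pow_left hBA)
  exact ⟨main, fun H r => (H (m * r)).imp fun l => main r l⟩
end

section
/- Let π : G → Q be a group homomorphism with finite kernel K, and let A ⊆ G be non-empty. If π(A) is an asymptotic (r,l)-approximate group in Q, then A is an asymptotic (r, |K|·l)-approximate group in G. -/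
open Pointwise

theorem stmt_11 {G Q : Type*} [Group G] [Group Q] (π : G →* Q)
    (hK : (π.ker : Set G).Finite)
    (A : Set G) (hA : A.Nonempty) (r l : ℕ)
    (h : IsAsympApproxGroup (π '' A) r l) :
    IsAsympApproxGroup A r (Nat.card π.ker * l) := by
  classical
  obtain ⟨h₀, hh⟩ := h
  have hKcard : Nat.card π.ker = hK.toFinset.card := by
    rw [show Nat.card π.ker = Nat.card (π.ker : Set G) from rfl,
      Nat.card_eq_card_finite_toFinset hK]
  refine ⟨h₀, fun n hn => ?_⟩
  obtain ⟨X, hXcard, hXcov⟩ := hh n hn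
  set Kf := hK.toFinset with hKf
  refine ⟨X.biUnion (fun x => if hx : ∃ g, π g = x then (Classical.choose hx) • Kf else ∅),
    ?_, ?_⟩
  · calc _ ≤ X.card * Kf.card := by
          apply Finset.card_biUnion_le_card_mul
          intro x _
          split
          · simpa using (Finset.card_smul_finset _ _).le
          · simp
      _ ≤ (Nat.card π.ker) * l := by
          rw [hKcard, mul_comm]
          exact Nat.mul_le_mul le_rfl hXcard
  · intro g hg
    have hπg : π g ∈ (X : Set Q) * (π '' A) ^ n := by
      apply hXcov
      rw [← Set.image_pow]
      exact Set.mem_image_of_mem _ hg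
    obtain ⟨x, hx, y, hy, hxy⟩ := hπg
    rw [← Set.image_pow] at hy
    obtain ⟨b, hb, rfl⟩ := hy
    have hex : ∃ g', π g' = x := ⟨g * b⁻¹, by rw [map_mul, map_inv, ← hxy, mul_inv_cancel_right]⟩
    refine ⟨g * b⁻¹, ?_, b, hb, by group⟩
    apply Finset.mem_coe.2
    apply Finset.mem_biUnion.2
    refine ⟨x, hx, ?_⟩
    rw [dif_pos hex]
    have hg0 := Classical.choose_spec hex
    refine Finset.mem_smul_finset.2 ⟨(Classical.choose hex)⁻¹ * (g * b⁻¹), ?_, by rw [smul_eq_mul]; group⟩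
    rw [hKf, Set.Finite.mem_toFinset]
    simp only [SetLike.mem_coe, MonoidHom.mem_ker, map_mul, map_inv, hg0]
    rw [← hxy]
    group
end

section
/- Let H = ℤ³ with multiplication (a,b,c)(a',b',c') = (a+a', b+b', c+c'−a'b), x = (1,0,0), y = (0,1,0), and A := {e} ∪ {xy^n : n ≥ 0}. Then every element of A^h is either e or of the form (k, B, C) with 1 ≤ k ≤ h, B ≥ 0, and C ≥ −(k−1)B. -/
open Pointwise

/-- The integer Heisenberg group realized on `ℤ³` with multiplication
`(a,b,c)(a',b',c') = (a+a', b+b', c+c'-a'b)`. -/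
@[ext]
structure Heis where
  a : ℤ
  b : ℤ
  c : ℤ

namespace Heis

instance : Mul Heis := ⟨fun p q => ⟨p.a + q.a, p.b + q.b, p.c + q.c - q.a * p.b⟩⟩
instance : One Heis := ⟨⟨0, 0, 0⟩⟩
instance : Inv Heis := ⟨fun p => ⟨-p.a, -p.b, -p.c - p.a * p.b⟩⟩

@[simp] lemma mul_def (p q : Heis) :
    p * q = ⟨p.a + q.a, p.b + q.b, p.c + q.c - q.a * p.b⟩ := rfl
@[simp] lemma one_def : (1 : Heis) = ⟨0, 0, 0⟩ := rfl
@[simp] lemma inv_def (p : Heis) : p⁻¹ = ⟨-p.a, -p.b, -p.c - p.a * p.b⟩ := rfl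

instance : Group Heis where
  mul_assoc p q r := by ext <;> simp <;> ring
  one_mul p := by ext <;> simp
  mul_one p := by ext <;> simp
  inv_mul_cancel p := by ext <;> simp <;> ring

/-- `x = (1,0,0)`. -/
def x : Heis := ⟨1, 0, 0⟩

/-- `y = (0,1,0)`. -/
def y : Heis := ⟨0, 1, 0⟩

end Heis

lemma aux_yn (n : ℕ) : Heis.y ^ n = ⟨0, n, 0⟩ := by
  induction n with
  | zero => simp
  | succ k ih => rw [pow_succ, ih]; ext <;> simp [Heis.y] <;> push_cast <;> ring

lemma aux_xyn (n : ℕ) : Heis.x * Heis.y ^ n = ⟨1, n, 0⟩ := by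
  rw [aux_yn]; simp [Heis.x]

theorem stmt_13 (A : Set Heis)
    (hA : A = {1} ∪ {g : Heis | ∃ n : ℕ, g = Heis.x * Heis.y ^ n})
    (h : ℕ) (g : Heis) (hg : g ∈ A ^ h) :
    g = 1 ∨ ∃ k B C : ℤ, g = ⟨k, B, C⟩ ∧ 1 ≤ k ∧ k ≤ (h : ℤ) ∧ 0 ≤ B ∧
      -((k - 1) * B) ≤ C := by
  subst hA
  induction h generalizing g with
  | zero =>
    simp only [pow_zero, Set.mem_one] at hg
    exact Or.inl hg
  | succ n ih =>
    rw [pow_succ] at hg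
    obtain ⟨g', hg', a, ha, rfl⟩ := hg
    beta_reduce
    rcases ha with ha | ⟨m, rfl⟩
    · rcases ih g' hg' with h1 | ⟨k, B, C, rfl, hk1, hk2, hB, hC⟩
      · simp only [Set.mem_singleton_iff] at ha
        subst ha h1; exact Or.inl (one_mul 1)
      · simp only [Set.mem_singleton_iff] at ha
        subst ha
        refine Or.inr ⟨k, B, C, by simp, hk1, ?_, hB, hC⟩
        push_cast; omega
    · rcases ih g' hg' with h1 | ⟨k, B, C, rfl, hk1, hk2, hB, hC⟩
      · subst h1
        refine Or.inr ⟨1, m, 0, ?_, le_refl _, by push_cast; omega, by positivity, by simp⟩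
        rw [one_mul, aux_xyn]
      · refine Or.inr ⟨k + 1, B + m, C - B, ?_, by omega, by push_cast; omega, by positivity, ?_⟩
        · rw [aux_xyn]; ext <;> simp <;> push_cast <;> ring
        · nlinarith [Int.natCast_nonneg m, mul_nonneg (sub_nonneg.mpr hk1) (Int.natCast_nonneg m)]
end

section
/- Let H = ℤ³ with multiplication (a,b,c)(a',b',c') = (a+a', b+b', c+c'−a'b), x = (1,0,0), y = (0,1,0), and A := {e} ∪ {xy^n : n ≥ 0}. Then for every r ≥ 2, every h ≥ 1, and every finite X ⊆ H, one has A^{rh} ⊄ X·A^h. Consequently A is not an asymptotic (r,l)-approximate group for any r ≥ 2 and l ∈ ℕ. -/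
open Pointwise

namespace Heis

lemma y_pow (n : ℕ) : y ^ n = ⟨0, (n : ℤ), 0⟩ := by
  induction n with
  | zero => rfl
  | succ n ih => rw [pow_succ, ih]; ext <;> simp [y] <;> push_cast <;> ring

lemma x_mul_y_pow (n : ℕ) : x * y ^ n = ⟨1, (n : ℤ), 0⟩ := by
  rw [y_pow]; ext <;> simp [x]

end Heis

section aux
open Heis

lemma pow_struct (A : Set Heis)
    (hA : A = {1} ∪ {g : Heis | ∃ n : ℕ, g = Heis.x * Heis.y ^ n}) :
    ∀ h : ℕ, ∀ g : Heis, g ∈ A ^ h →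
      0 ≤ g.b ∧ g.c ≤ 0 ∧ -g.c ≤ ((h : ℤ) - 1) * g.b := by
  intro h
  induction h with
  | zero =>
    intro g hg
    rw [pow_zero, Set.mem_one] at hg
    subst hg
    simp
  | succ h ih =>
    intro g hg
    rw [pow_succ] at hg
    obtain ⟨p, hp, q, hq, rfl⟩ := hg
    obtain ⟨hb, hc, hbd⟩ := ih p hp
    rw [hA] at hq
    rcases hq with hq | ⟨n, rfl⟩
    · simp only [Set.mem_singleton_iff] at hq
      subst hq
      refine ⟨by simpa using hb, by simpa using hc, ?_⟩
      simp only [mul_def, one_def]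
      push_cast
      nlinarith
    · rw [x_mul_y_pow]
      refine ⟨?_, ?_, ?_⟩ <;> simp only [mul_def] <;> push_cast
      · positivity
      · nlinarith [Int.natCast_nonneg n]
      · nlinarith [Int.natCast_nonneg n]

lemma g_mem (A : Set Heis)
    (hA : A = {1} ∪ {g : Heis | ∃ n : ℕ, g = Heis.x * Heis.y ^ n}) (N : ℕ) :
    ∀ m : ℕ, 1 ≤ m → (⟨(m : ℤ), (N : ℤ), -(((m : ℤ) - 1) * N)⟩ : Heis) ∈ A ^ m := by
  intro m hm
  induction m, hm using Nat.le_induction with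
  | base =>
    rw [pow_one, hA]
    right
    exact ⟨N, by rw [x_mul_y_pow]; ext <;> simp⟩
  | succ m hm ih =>
    rw [pow_succ]
    refine ⟨_, ih, x, ?_, ?_⟩
    · rw [hA]; right; exact ⟨0, by simp [x]⟩
    · ext <;> simp [x] <;> push_cast <;> ring

end aux

theorem stmt_14 (A : Set Heis)
    (hA : A = {1} ∪ {g : Heis | ∃ n : ℕ, g = Heis.x * Heis.y ^ n}) :
    (∀ r : ℕ, 2 ≤ r → ∀ h : ℕ, 1 ≤ h → ∀ X : Finset Heis,
        ¬ A ^ (r * h) ⊆ (X : Set Heis) * A ^ h) ∧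
    (∀ r : ℕ, 2 ≤ r → ∀ l : ℕ, ¬ IsAsympApproxGroup A r l) := by
  have main : ∀ r : ℕ, 2 ≤ r → ∀ h : ℕ, 1 ≤ h → ∀ X : Finset Heis,
      ¬ A ^ (r * h) ⊆ (X : Set Heis) * A ^ h := by
    intro r hr h hh X hsub
    set D : Heis → ℤ := fun p =>
      -p.c + (((r : ℤ) * h) - p.a) * p.b - ((h : ℤ) - 1) * p.b with hD
    set N : ℕ := X.sup (fun p => (D p).toNat) + 1 with hN
    have hrh : 1 ≤ r * h := Nat.one_le_iff_ne_zero.mpr (by positivity)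
    have hg := g_mem A hA N (r * h) hrh
    obtain ⟨p, hp, q, hq, hpq⟩ := hsub hg
    obtain ⟨hqb, hqc, hqbd⟩ := pow_struct A hA h q hq
    have e1 : p.a + q.a = ((r : ℤ) * h) := by
      have := congrArg Heis.a hpq; simpa [Heis.mul_def] using this
    have e2 : p.b + q.b = (N : ℤ) := by
      have := congrArg Heis.b hpq; simpa [Heis.mul_def] using this
    have e3 : p.c + q.c - q.a * p.b = -(((r : ℤ) * h - 1) * N) := by
      have := congrArg Heis.c hpq
      simpa [Heis.mul_def] using this
    have hple : D p < (N : ℤ) := by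
      have h1 : D p ≤ ((D p).toNat : ℤ) := Int.self_le_toNat _
      have h2 : (D p).toNat ≤ X.sup (fun p => (D p).toNat) := by
        have := Finset.le_sup (f := fun q => (D q).toNat) (Finset.mem_coe.mp hp)
        simpa using this
      have h3 : ((D p).toNat : ℤ) ≤ (((X.sup (fun p => (D p).toNat) : ℕ)) : ℤ) := by
        exact_mod_cast h2
      omega
    have hr' : (2 : ℤ) ≤ (r : ℤ) := by exact_mod_cast hr
    have hh' : (1 : ℤ) ≤ (h : ℤ) := by exact_mod_cast hh
    have hN' : (1 : ℤ) ≤ (N : ℤ) := by exact_mod_cast Nat.le_add_left 1 _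
    -- From hqbd and the coordinate equations we derive a contradiction.
    have key : ((r : ℤ) * h - h) * N ≤ D p := by
      have hqa : q.a = (r : ℤ) * h - p.a := by linarith
      have hqb' : q.b = (N : ℤ) - p.b := by linarith
      have hqc' : q.c = -(((r : ℤ) * h - 1) * N) - p.c + q.a * p.b := by linarith
      have h4 : q.a * p.b = ((r : ℤ) * h - p.a) * p.b := by rw [hqa]
      have h5 : ((h : ℤ) - 1) * q.b = ((h : ℤ) - 1) * ((N : ℤ) - p.b) := by rw [hqb']
      simp only [hD]
      nlinarith [hqbd, e3, h4, h5]
    have hfin : (N : ℤ) ≤ ((r : ℤ) * h - h) * N := by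
      nlinarith [mul_nonneg (by nlinarith : (0:ℤ) ≤ (r : ℤ) * h - h - 1)
        (by positivity : (0:ℤ) ≤ (N : ℤ))]
    linarith
  refine ⟨main, ?_⟩
  intro r hr l ⟨h₀, hH⟩
  obtain ⟨X, _, hsub⟩ := hH (max h₀ 1) (le_max_left _ _)
  exact main r hr (max h₀ 1) (le_max_right _ _) X hsub
end

section
/- Let G be a group and A ⊆ G a finite non-empty symmetric set containing e, such that Γ := ⟨A⟩ has polynomial growth with respect to A: there are C₁, C₂ > 0 and d ≥ 1 with C₁ n^d ≤ |A^n| ≤ C₂ n^d for all n ≥ 1. Then A is an asymptotic approximate group: for every r ∈ ℕ there exist l and h₀ such that for all h ≥ h₀ there is X_h ⊆ Γ with |X_h| ≤ l and A^{rh} ⊆ X_h · A^h. -/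
open Pointwise

theorem stmt_17 {G : Type*} [Group G] [DecidableEq G]
    (A : Finset G) (hne : A.Nonempty) (hsym : A⁻¹ = A) (hone : (1 : G) ∈ A)
    (C₁ C₂ : ℝ) (hC₁ : 0 < C₁) (hC₂ : 0 < C₂) (d : ℕ) (hd : 1 ≤ d)
    (hgrowth : ∀ n : ℕ, 1 ≤ n →
      C₁ * (n : ℝ) ^ d ≤ ((A ^ n).card : ℝ) ∧ ((A ^ n).card : ℝ) ≤ C₂ * (n : ℝ) ^ d) :
    ∀ r : ℕ, ∃ l h₀ : ℕ, ∀ h : ℕ, h₀ ≤ h → ∃ X : Finset G,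
      (X : Set G) ⊆ (Subgroup.closure (A : Set G) : Set G) ∧ X.card ≤ l ∧
      A ^ (r * h) ⊆ X * A ^ h := by
  intro r
  set K : ℝ := C₂ / C₁ * (3 * (r + 1) : ℝ) ^ d with hK
  refine ⟨⌈K⌉₊, 2, fun h hh ↦ ?_⟩
  set k := h / 2 with hk
  have hk1 : 1 ≤ k := by omega
  have h2k : 2 * k ≤ h := by omega
  have h3k : h ≤ 3 * k := by omega
  -- key cardinality estimate
  have hcardk := (hgrowth k hk1).1
  have hrk : 1 ≤ r * h + k := by omega
  have hcard2 := (hgrowth (r * h + k) hrk).2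
  have hpos : (0 : ℝ) < (k : ℝ) ^ d := by positivity
  have hKbound : ((A ^ (r * h) * A ^ k).card : ℝ) ≤ K * (A ^ k).card := by
    have hmul : A ^ (r * h) * A ^ k = A ^ (r * h + k) := (pow_add A (r * h) k).symm
    rw [hmul]
    calc ((A ^ (r * h + k)).card : ℝ) ≤ C₂ * ((r * h + k : ℕ) : ℝ) ^ d := hcard2
      _ ≤ C₂ * ((3 * (r + 1) : ℝ) * k) ^ d := by
          have hlen : r * h + k ≤ 3 * (r + 1) * k := by nlinarith [h3k]
          have hle : ((r * h + k : ℕ) : ℝ) ≤ (3 * (r + 1) : ℝ) * k := by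
            push_cast; exact_mod_cast (Nat.cast_le (α := ℝ)).2 hlen
          exact mul_le_mul_of_nonneg_left (pow_le_pow_left₀ (by positivity) hle d) hC₂.le
      _ = K * (C₁ * (k : ℝ) ^ d) := by
          rw [hK, mul_pow]
          field_simp
      _ ≤ K * (A ^ k).card := by
          have hKpos : 0 ≤ K := by positivity
          exact mul_le_mul_of_nonneg_left hcardk hKpos
  obtain ⟨F, hFA, hFcard, hFcov⟩ :=
    Finset.ruzsa_covering_mul (hne.pow) hKbound
  refine ⟨F, ?_, ?_, ?_⟩
  · -- F ⊆ closure A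
    intro x hx
    have hx' : x ∈ A ^ (r * h) := hFA (by exact_mod_cast hx)
    have : (A : Set G) ^ (r * h) ⊆ (Subgroup.closure (A : Set G) : Set G) := by
      intro y hy
      have hsub : (A : Set G) ⊆ (Subgroup.closure (A : Set G) : Set G) :=
        Subgroup.subset_closure
      have key : ∀ n : ℕ, (A : Set G) ^ n ⊆ (Subgroup.closure (A : Set G) : Set G) := by
        intro n
        induction n with
        | zero => simpa using (Subgroup.closure (A : Set G)).one_mem
        | succ n ih =>
          rw [pow_succ]
          rintro z ⟨a, ha, b, hb, rfl⟩
          exact (Subgroup.closure (A : Set G)).mul_mem (ih ha) (hsub hb)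
      exact key _ hy
    exact this (by exact_mod_cast Finset.coe_pow A (r * h) ▸ Finset.mem_coe.2 hx')
  · exact_mod_cast hFcard.trans (Nat.le_ceil K)
  · -- covering
    refine hFcov.trans ?_
    have hdiv : A ^ k / A ^ k = A ^ (2 * k) := by
      rw [div_eq_mul_inv, ← inv_pow, hsym, ← pow_add, two_mul]
    rw [hdiv]
    exact Finset.mul_subset_mul_left (Finset.pow_subset_pow_right hone h2k)
end
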